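/- Let u : ℝⁿ → ℝ be upper semicontinuous and bounded above, let ε > 0 and let u^ε be its ε-sup-convolution. If (p, A) is an upper contact jet for u^ε at a point x, then (p, A) is an upper contact jet for u at the point x + εp, and moreover u^ε(x) = u(x + εp) − (ε/2)|p|². -/
import Mathlib


open scoped RealInnerProductSpace
open Filter Topology

noncomputable def supConv {n : ℕ} (u : EuclideanSpace ℝ (Fin n) → ℝ)
    (X : Set (EuclideanSpace ℝ (Fin n))) (ε : ℝ)
    (x : EuclideanSpace ℝ (Fin n)) : ℝ :=
  sSup ((fun y => u y - ‖y - x‖ ^ 2 / (2 * ε)) '' X)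

set_option maxHeartbeats 1000000 in
theorem stmt_15 {n : ℕ} {u : EuclideanSpace ℝ (Fin n) → ℝ}
    (husc : UpperSemicontinuous u) (hbdd : BddAbove (Set.range u))
    {ε : ℝ} (hε : 0 < ε) {x p : EuclideanSpace ℝ (Fin n)}
    {A : EuclideanSpace ℝ (Fin n) →L[ℝ] EuclideanSpace ℝ (Fin n)}
    (hjet : ∀ᶠ y in 𝓝 x, supConv u Set.univ ε y ≤
      supConv u Set.univ ε x + ⟪p, y - x⟫ + (1/2) * ⟪A (y - x), y - x⟫) :
    (∀ᶠ y in 𝓝 (x + ε • p),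
        u y ≤ u (x + ε • p) + ⟪p, y - (x + ε • p)⟫ +
          (1/2) * ⟪A (y - (x + ε • p)), y - (x + ε • p)⟫) ∧
    supConv u Set.univ ε x = u (x + ε • p) - ε / 2 * ‖p‖ ^ 2 := by
  obtain ⟨M, hM⟩ := hbdd
  have hMu : ∀ y, u y ≤ M := fun y => hM (Set.mem_range_self y)
  set q := x + ε • p with hq
  have hbddf : ∀ x' : EuclideanSpace ℝ (Fin n),
      BddAbove ((fun y => u y - ‖y - x'‖ ^ 2 / (2 * ε)) '' Set.univ) := by
    intro x'
    refine ⟨M, ?_⟩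
    rintro _ ⟨y, -, rfl⟩
    have h0 : (0:ℝ) ≤ ‖y - x'‖ ^ 2 / (2 * ε) := by positivity
    have := hMu y
    simp only
    linarith
  have hle : ∀ x' y : EuclideanSpace ℝ (Fin n),
      u y - ‖y - x'‖ ^ 2 / (2 * ε) ≤ supConv u Set.univ ε x' := by
    intro x' y
    exact le_csSup (hbddf x') ⟨y, Set.mem_univ y, rfl⟩
  have hne : ∀ x' : EuclideanSpace ℝ (Fin n),
      ((fun y => u y - ‖y - x'‖ ^ 2 / (2 * ε)) '' Set.univ).Nonempty :=
    fun x' => ⟨_, ⟨0, Set.mem_univ 0, rfl⟩⟩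
  have hub : ∀ x' : EuclideanSpace ℝ (Fin n), supConv u Set.univ ε x' ≤ M := by
    intro x'
    apply csSup_le (hne x')
    rintro _ ⟨y, -, rfl⟩
    have h0 : (0:ℝ) ≤ ‖y - x'‖ ^ 2 / (2 * ε) := by positivity
    have := hMu y
    simp only
    linarith
  obtain ⟨δ, hδpos, hjet'⟩ := Metric.eventually_nhds_iff.mp hjet
  set K : ℝ := 1 / (2 * ε) + ‖A‖ / 2 with hKdef
  have hKpos : 0 < K := by positivity
  -- the key inequality
  have key : ∀ y : EuclideanSpace ℝ (Fin n), ∀ t : ℝ, 0 ≤ t → t * ‖y - q‖ < δ →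
      u y - ‖y - x‖ ^ 2 / (2 * ε) ≤ supConv u Set.univ ε x
        - t / ε * ‖y - q‖ ^ 2 + t ^ 2 * K * ‖y - q‖ ^ 2 := by
    intro y t ht htδ
    set v := y - q with hv
    have hdist : dist (x + t • v) x < δ := by
      rw [dist_eq_norm]
      simpa [norm_smul, abs_of_nonneg ht] using htδ
    have h1 : u y - ‖y - (x + t • v)‖ ^ 2 / (2 * ε) ≤ supConv u Set.univ ε (x + t • v) :=
      hle _ y
    have h2 := hjet' hdist
    have hzx : x + t • v - x = t • v := by abel
    rw [hzx] at h2
    have hip : ⟪p, t • v⟫ = t * ⟪p, v⟫ := real_inner_smul_right _ _ _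
    have hiA : ⟪A (t • v), t • v⟫ = t ^ 2 * ⟪A v, v⟫ := by
      rw [map_smul, real_inner_smul_left, real_inner_smul_right]; ring
    rw [hip, hiA] at h2
    have hyx : y - x = v + ε • p := by rw [hv, hq]; abel
    have hnormyz : ‖y - (x + t • v)‖ ^ 2
        = ‖y - x‖ ^ 2 - 2 * t * (‖v‖ ^ 2 + ε * ⟪p, v⟫) + t ^ 2 * ‖v‖ ^ 2 := by
      have e1 : y - (x + t • v) = (y - x) - t • v := by abel
      have hipv : ⟪v + ε • p, v⟫ = ‖v‖ ^ 2 + ε * ⟪p, v⟫ := by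
        rw [inner_add_left, real_inner_smul_left, real_inner_self_eq_norm_sq]
      rw [e1, norm_sub_sq_real, real_inner_smul_right, norm_smul, hyx, hipv,
        Real.norm_eq_abs, mul_pow, sq_abs]
      ring
    rw [hnormyz] at h1
    have hAv : ⟪A v, v⟫ ≤ ‖A‖ * ‖v‖ ^ 2 := by
      calc ⟪A v, v⟫ ≤ ‖A v‖ * ‖v‖ := real_inner_le_norm _ _
        _ ≤ (‖A‖ * ‖v‖) * ‖v‖ := by
            have := A.le_opNorm v
            nlinarith [norm_nonneg v]
        _ = ‖A‖ * ‖v‖ ^ 2 := by ring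
    have hεne : (ε:ℝ) ≠ 0 := ne_of_gt hε
    have hexp : (‖y - x‖ ^ 2 - 2 * t * (‖v‖ ^ 2 + ε * ⟪p, v⟫) + t ^ 2 * ‖v‖ ^ 2) / (2 * ε)
        = ‖y - x‖ ^ 2 / (2 * ε) - t / ε * ‖v‖ ^ 2 - t * ⟪p, v⟫
          + t ^ 2 * ‖v‖ ^ 2 / (2 * ε) := by
      field_simp
      ring
    rw [hexp] at h1
    have hfin : t ^ 2 * ⟪A v, v⟫ / 2 ≤ t ^ 2 * (‖A‖ * ‖v‖ ^ 2) / 2 := by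
      nlinarith [sq_nonneg t]
    have hKexp : t ^ 2 * K * ‖v‖ ^ 2
        = t ^ 2 * ‖v‖ ^ 2 / (2 * ε) + t ^ 2 * (‖A‖ * ‖v‖ ^ 2) / 2 := by
      rw [hKdef]; ring
    rw [hKexp]
    linarith
  -- boundedness of near-maximizers
  set S := supConv u Set.univ ε x with hS
  set R : ℝ := Real.sqrt (2 * ε * (M - S + 1)) + ε * ‖p‖ with hRdef
  have hR0 : 0 ≤ R := by positivity
  have hRbound : ∀ y : EuclideanSpace ℝ (Fin n),
      S - 1 < u y - ‖y - x‖ ^ 2 / (2 * ε) → ‖y - q‖ ≤ R := by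
    intro y hy
    have h1 : ‖y - x‖ ^ 2 / (2 * ε) < u y - S + 1 := by linarith
    have h2 : ‖y - x‖ ^ 2 ≤ 2 * ε * (M - S + 1) := by
      have h2ε : (0:ℝ) < 2 * ε := by linarith
      have ha := (div_lt_iff₀ h2ε).mp h1
      have hb : (u y - S + 1) * (2 * ε) ≤ (M - S + 1) * (2 * ε) :=
        mul_le_mul_of_nonneg_right (by linarith [hMu y]) h2ε.le
      rw [mul_comm]
      linarith
    have h3 : ‖y - x‖ ≤ Real.sqrt (2 * ε * (M - S + 1)) := by
      rw [show ‖y - x‖ = Real.sqrt (‖y - x‖ ^ 2) by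
        rw [Real.sqrt_sq (norm_nonneg _)]]
      exact Real.sqrt_le_sqrt h2
    have h4 : y - q = (y - x) - ε • p := by rw [hq]; abel
    calc ‖y - q‖ = ‖(y - x) - ε • p‖ := by rw [h4]
      _ ≤ ‖y - x‖ + ‖ε • p‖ := norm_sub_le _ _
      _ ≤ Real.sqrt (2 * ε * (M - S + 1)) + ε * ‖p‖ := by
          rw [norm_smul, Real.norm_eq_abs, abs_of_pos hε]
          linarith
  -- the hard direction
  have hup : S + ε / 2 * ‖p‖ ^ 2 ≤ u q := by
    by_contra hcon
    push_neg at hcon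
    set γ := S + ε / 2 * ‖p‖ ^ 2 - u q with hγ
    have hγpos : 0 < γ := by rw [hγ]; linarith
    have husc' := husc q (u q + γ / 2) (by linarith)
    obtain ⟨r', hr'pos, hr'⟩ := Metric.eventually_nhds_iff.mp husc'
    set r : ℝ := min r' (γ / (8 * (‖p‖ + 1))) with hrdef
    have hrpos : 0 < r := lt_min hr'pos (by positivity)
    have hrp : ‖p‖ * r ≤ γ / 8 := by
      have h1 : r ≤ γ / (8 * (‖p‖ + 1)) := min_le_right _ _
      have h2 : 0 ≤ ‖p‖ := norm_nonneg p
      have h3 : (0:ℝ) < ‖p‖ + 1 := by linarith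
      have h4 : (0:ℝ) ≤ γ / (8 * (‖p‖ + 1)) := by positivity
      have h5 : (‖p‖ + 1) * (γ / (8 * (‖p‖ + 1))) = γ / 8 := by
        field_simp
      calc ‖p‖ * r ≤ ‖p‖ * (γ / (8 * (‖p‖ + 1))) := mul_le_mul_of_nonneg_left h1 h2
        _ ≤ (‖p‖ + 1) * (γ / (8 * (‖p‖ + 1))) := by nlinarith [h4]
        _ = γ / 8 := h5
    set t : ℝ := min (δ / (R + 1)) (1 / (2 * ε * K)) with htdef
    have htpos : 0 < t := lt_min (by positivity) (by positivity)
    set β : ℝ := min (min 1 (γ / 4)) (t * r ^ 2 / (2 * ε)) with hβdef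
    have hβpos : 0 < β := lt_min (lt_min one_pos (by positivity)) (by positivity)
    have hbound : ∀ y : EuclideanSpace ℝ (Fin n),
        u y - ‖y - x‖ ^ 2 / (2 * ε) ≤ S - β := by
      intro y
      by_cases h1 : ‖y - q‖ < r
      · -- near the putative max: use usc
        have hu : u y < u q + γ / 2 := by
          apply hr'
          rw [dist_eq_norm]
          exact lt_of_lt_of_le h1 (min_le_left _ _)
        have hcs : ε ^ 2 * ‖p‖ ^ 2 - 2 * ε * ‖p‖ * ‖y - q‖ ≤ ‖y - x‖ ^ 2 := by
          have e1 : y - x = (y - q) + ε • p := by rw [hq]; abel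
          rw [e1, norm_add_sq_real, real_inner_smul_right, norm_smul,
            Real.norm_eq_abs, abs_of_pos hε]
          have hcs2 : -(‖y - q‖ * ‖p‖) ≤ ⟪y - q, p⟫ :=
            neg_le_of_abs_le (abs_real_inner_le_norm _ _)
          nlinarith [sq_nonneg (‖y - q‖), norm_nonneg (y - q), norm_nonneg p, hε.le]
        have hdiv : ε / 2 * ‖p‖ ^ 2 - ‖p‖ * r ≤ ‖y - x‖ ^ 2 / (2 * ε) := by
          rw [le_div_iff₀ (by linarith : (0:ℝ) < 2 * ε)]
          have hmono : 2 * ε * ‖p‖ * ‖y - q‖ ≤ 2 * ε * ‖p‖ * r :=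
            mul_le_mul_of_nonneg_left h1.le (by positivity)
          nlinarith [hcs, hmono]
        have hβ1 : β ≤ γ / 4 := le_trans (min_le_left _ _) (min_le_right _ _)
        have : u y - ‖y - x‖ ^ 2 / (2 * ε) < u q + γ / 2 - ε / 2 * ‖p‖ ^ 2 + ‖p‖ * r := by
          linarith
        have huq : u q = S + ε / 2 * ‖p‖ ^ 2 - γ := by rw [hγ]; ring
        rw [huq] at this
        linarith
      · push_neg at h1
        by_cases h2 : u y - ‖y - x‖ ^ 2 / (2 * ε) ≤ S - 1
        · have hβ1 : β ≤ 1 := le_trans (min_le_left _ _) (min_le_left _ _)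
          linarith
        · push_neg at h2
          have hvR : ‖y - q‖ ≤ R := hRbound y h2
          have htδ : t * ‖y - q‖ < δ := by
            have ht1 : t ≤ δ / (R + 1) := min_le_left _ _
            have : t * ‖y - q‖ ≤ (δ / (R + 1)) * R := by
              apply mul_le_mul ht1 hvR (norm_nonneg _) (by positivity)
            calc t * ‖y - q‖ ≤ (δ / (R + 1)) * R := this
              _ < δ := by
                  rw [div_mul_eq_mul_div, div_lt_iff₀ (by linarith : (0:ℝ) < R + 1)]
                  nlinarith
          have hk := key y t htpos.le htδ
          have ht2 : t ^ 2 * K ≤ t / (2 * ε) := by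
            have ht1 : t ≤ 1 / (2 * ε * K) := min_le_right _ _
            have h2e : (0:ℝ) < 2 * ε * K := by positivity
            have ha : t * (2 * ε * K) ≤ 1 := by
              calc t * (2 * ε * K) ≤ (1 / (2 * ε * K)) * (2 * ε * K) :=
                    mul_le_mul_of_nonneg_right ht1 h2e.le
                _ = 1 := by field_simp
            have hb : t * (t * (2 * ε * K)) ≤ t * 1 := mul_le_mul_of_nonneg_left ha htpos.le
            rw [le_div_iff₀ (by linarith : (0:ℝ) < 2 * ε)]
            calc t ^ 2 * K * (2 * ε) = t * (t * (2 * ε * K)) := by ring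
              _ ≤ t * 1 := hb
              _ = t := mul_one t
          have hvr : r ^ 2 ≤ ‖y - q‖ ^ 2 := by nlinarith [hrpos.le, norm_nonneg (y - q)]
          have hstep : S - t / ε * ‖y - q‖ ^ 2 + t ^ 2 * K * ‖y - q‖ ^ 2
              ≤ S - t / (2 * ε) * ‖y - q‖ ^ 2 := by
            have hv2 : 0 ≤ ‖y - q‖ ^ 2 := sq_nonneg _
            have e1 : t / ε = t / (2 * ε) + t / (2 * ε) := by field_simp; ring
            nlinarith [mul_le_mul_of_nonneg_right ht2 hv2]
          have hβ2 : β ≤ t * r ^ 2 / (2 * ε) := min_le_right _ _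
          have hfin : t / (2 * ε) * r ^ 2 ≤ t / (2 * ε) * ‖y - q‖ ^ 2 := by
            apply mul_le_mul_of_nonneg_left hvr (by positivity)
          have : t * r ^ 2 / (2 * ε) = t / (2 * ε) * r ^ 2 := by ring
          linarith
    have hfinal : S ≤ S - β := by
      rw [hS]
      apply csSup_le (hne x)
      rintro _ ⟨y, -, rfl⟩
      exact hbound y
    linarith
  -- the easy direction
  have hnq : ‖q - x‖ ^ 2 / (2 * ε) = ε / 2 * ‖p‖ ^ 2 := by
    have : q - x = ε • p := by rw [hq]; abel
    rw [this, norm_smul, Real.norm_eq_abs, abs_of_pos hε, mul_pow]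
    field_simp
  have hlow : u q - ε / 2 * ‖p‖ ^ 2 ≤ S := by
    have := hle x q
    rw [hnq] at this
    exact this
  have heq : S = u q - ε / 2 * ‖p‖ ^ 2 := le_antisymm (by linarith) (by linarith)
  refine ⟨Metric.eventually_nhds_iff.mpr ⟨δ, hδpos, ?_⟩, heq⟩
  intro y hy
  have hzq : y - ε • p - x = y - q := by rw [hq]; abel
  have hdist : dist (y - ε • p) x < δ := by
    rw [dist_eq_norm, hzq]
    rw [dist_eq_norm] at hy
    exact hy
  have h2 := hjet' hdist
  rw [hzq] at h2
  have h1 := hle (y - ε • p) y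
  have hyz : y - (y - ε • p) = ε • p := by abel
  have hnyz : ‖y - (y - ε • p)‖ ^ 2 / (2 * ε) = ε / 2 * ‖p‖ ^ 2 := by
    rw [hyz, norm_smul, Real.norm_eq_abs, abs_of_pos hε, mul_pow]
    field_simp
  rw [hnyz] at h1
  rw [heq] at h2
  linarith
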